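/- Let f : U → U₁ be a strict C¹ isomorphism between two open subsets of K^n and let u ∈ S'(U). Then a point (x₀,ξ₀) ∈ U × (K^n ∖ {0}) is Λ-micro-locally smooth for u if and only if the point (f(x₀), (ᵗDf(x₀))^{-1}(ξ₀)) is Λ-micro-locally smooth for the push-forward f_*u ∈ S'(U₁). -/

import Mathlib

open MeasureTheory Filter Topology
open scoped BigOperators Classical

noncomputable section

/-- Axiomatization of a non-archimedean local field: a topological field equipped with a
surjective discrete valuation `ord : K → ℤ ∪ {∞}` whose closed balls are compact open and
form a neighborhood basis at every point. -/
class NALocalField (K : Type) [Field K] [TopologicalSpace K] where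
  ord : K → WithTop ℤ
  ord_eq_top_iff : ∀ x : K, ord x = ⊤ ↔ x = 0
  ord_mul : ∀ x y : K, ord (x * y) = ord x + ord y
  ord_add : ∀ x y : K, min (ord x) (ord y) ≤ ord (x + y)
  ord_surjective : ∀ m : ℤ, ∃ x : K, ord x = (m : WithTop ℤ)
  isOpen_ball : ∀ m : ℤ, IsOpen {x : K | (m : WithTop ℤ) ≤ ord x}
  isCompact_ball : ∀ m : ℤ, IsCompact {x : K | (m : WithTop ℤ) ≤ ord x}
  nhds_basis : ∀ x : K, (nhds x).HasBasis (fun _ : ℤ => True)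
      (fun m => {y : K | (m : WithTop ℤ) ≤ ord (y - x)})

variable {K : Type} [Field K] [TopologicalSpace K] [IsTopologicalRing K] [NALocalField K]

/-- The minimum of the valuations of the coordinates of a vector; `|v| = q^{-ordVec v}`. -/
def ordVec {ι : Type} [Fintype ι] (v : ι → K) : WithTop ℤ :=
  Finset.univ.inf fun i => NALocalField.ord (v i)

/-- The ball of valuative radius `r` around `x` in `K^ι`. -/
def pball {ι : Type} [Fintype ι] (x : ι → K) (r : ℤ) : Set (ι → K) :=
  {y | (r : WithTop ℤ) ≤ ordVec (x - y)}

section SB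
variable {α : Type} [TopologicalSpace α]

/-- Schwartz–Bruhat functions on a subset `X ⊆ α`: locally constant compactly supported
`ℂ`-valued functions on `X` (as functions on the subtype). -/
def IsSB (X : Set α) (f : X → ℂ) : Prop :=
  IsLocallyConstant f ∧ HasCompactSupport f

/-- A distribution on `X`: a functional which is `ℂ`-linear on Schwartz–Bruhat functions. -/
def IsDistribution (X : Set α) (u : (X → ℂ) → ℂ) : Prop :=
  (∀ (c : ℂ) (f : X → ℂ), IsSB X f → u (c • f) = c * u f) ∧
  (∀ f g : X → ℂ, IsSB X f → IsSB X g → u (f + g) = u f + u g)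

/-- Schwartz–Bruhat functions on an open subset `U ⊆ α`, realized as locally constant
compactly supported functions on `α` whose support is contained in `U`. -/
def IsSBOn (U : Set α) (f : α → ℂ) : Prop :=
  IsLocallyConstant f ∧ HasCompactSupport f ∧ tsupport f ⊆ U

/-- A distribution on an open set `U ⊆ α`, in the ambient-function realization. -/
def IsDistributionOn (U : Set α) (u : (α → ℂ) → ℂ) : Prop :=
  (∀ (c : ℂ) (f : α → ℂ), IsSBOn U f → u (c • f) = c * u f) ∧
  (∀ f g : α → ℂ, IsSBOn U f → IsSBOn U g → u (f + g) = u f + u g)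

end SB

/-- `ψ` is an additive character of `K` which is trivial on the maximal ideal and
nontrivial on the ring of integers. -/
def IsStandardChar (ψ : AddChar K ℂ) : Prop :=
  (∀ x : K, (1 : WithTop ℤ) ≤ NALocalField.ord x → ψ x = 1) ∧
  (∃ x : K, (0 : WithTop ℤ) ≤ NALocalField.ord x ∧ ψ x ≠ 1)

/-- `Λ` is an open subgroup of finite index of `(K^×, ×)`. -/
structure IsOpenFinIndexSubgroup (Λ : Set K) : Prop where
  one_mem : (1 : K) ∈ Λ
  mul_mem : ∀ a ∈ Λ, ∀ b ∈ Λ, a * b ∈ Λ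
  inv_mem : ∀ a ∈ Λ, a⁻¹ ∈ Λ
  ne_zero : ∀ a ∈ Λ, a ≠ 0
  isOpen : IsOpen Λ
  finiteIndex : ∃ T : Finset K, ∀ x : K, x ≠ 0 → ∃ t ∈ T, t * x ∈ Λ

section Fourier
variable (ψ : AddChar K ℂ)

/-- `F(φu)(ξ) = u(x ↦ φ(x) ψ(x·ξ))` for a functional `u`. -/
def FTrans {ι : Type} [Fintype ι] (u : ((ι → K) → ℂ) → ℂ) (φ : (ι → K) → ℂ)
    (ξ : ι → K) : ℂ :=
  u fun x => φ x * ψ (∑ i, x i * ξ i)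

/-- `Λ`-microlocal smoothness of a distribution on an open subset `U ⊆ K^ι` at a point
`(x₀, ξ₀)`: there are neighborhoods `U₀ ∋ x₀` and `V₀ ∋ ξ₀` such that for every
Schwartz–Bruhat `φ` supported in `U₀` there is `N ∈ ℤ` with `F(φu)(λξ) = 0` for all
`ξ ∈ V₀` and all `λ ∈ Λ` with `ord λ < N`. -/
def LamSmoothAt (Λ : Set K) {ι : Type} [Fintype ι] (U : Set (ι → K))
    (u : ((ι → K) → ℂ) → ℂ) (x₀ ξ₀ : ι → K) : Prop :=
  ∃ U₀ V₀ : Set (ι → K), IsOpen U₀ ∧ IsOpen V₀ ∧ x₀ ∈ U₀ ∧ ξ₀ ∈ V₀ ∧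
    ∀ φ : (ι → K) → ℂ, IsSBOn U φ → tsupport φ ⊆ U₀ →
      ∃ N : ℤ, ∀ lam ∈ Λ, NALocalField.ord lam < (N : WithTop ℤ) →
        ∀ ξ ∈ V₀, FTrans ψ u φ (fun i => lam * ξ i) = 0

/-- The `Λ`-wave front set of a distribution on an open subset `U ⊆ K^ι`: the complement
in `U × (K^ι ∖ {0})` of the set of `Λ`-smooth points. -/
def WFset (Λ : Set K) {ι : Type} [Fintype ι] (U : Set (ι → K))
    (u : ((ι → K) → ℂ) → ℂ) : Set ((ι → K) × (ι → K)) :=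
  {p | p.1 ∈ U ∧ p.2 ≠ 0 ∧ ¬ LamSmoothAt ψ Λ U u p.1 p.2}

end Fourier

section StrictC1
variable {ι ι' : Type} [Fintype ι] [Fintype ι']

/-- `f` is strictly differentiable at `a` within the set `s`, with derivative matrix `A`:
`|f x - f y - A·(x - y)| / |x - y| → 0` as `(x, y) → (a, a)` within `s × s`, expressed
valuatively. -/
def HasStrictDerivWithin (f : (ι → K) → ι' → K) (A : Matrix ι' ι K) (s : Set (ι → K))
    (a : ι → K) : Prop :=
  ∀ c : ℤ, ∀ᶠ p : (ι → K) × (ι → K) in nhdsWithin (a, a) (s ×ˢ s),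
    (c : WithTop ℤ) + ordVec (p.1 - p.2) ≤ ordVec (f p.1 - f p.2 - A.mulVec (p.1 - p.2))

/-- `f` is strict `C¹` on `s`. -/
def StrictC1Within (f : (ι → K) → ι' → K) (s : Set (ι → K)) : Prop :=
  ∀ a ∈ s, ∃ A : Matrix ι' ι K, HasStrictDerivWithin f A s a

/-- `X ⊆ K^ι` is a strict `C¹` submanifold of dimension `ℓ`: every point of `X` admits an
ambient strict `C¹` chart flattening `X` onto an `ℓ`-dimensional coordinate subspace. -/
def IsSubmanifold (X : Set (ι → K)) (ℓ : ℕ) : Prop :=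
  X.Nonempty ∧ ∀ x ∈ X, ∃ (U V : Set (ι → K)) (f g : (ι → K) → ι → K),
    IsOpen U ∧ IsOpen V ∧ x ∈ U ∧ Set.MapsTo f U V ∧ Set.MapsTo g V U ∧
    (∀ y ∈ U, g (f y) = y) ∧ (∀ z ∈ V, f (g z) = z) ∧
    StrictC1Within f U ∧ StrictC1Within g V ∧
    ∃ J : Finset ι, J.card = ℓ ∧ f '' (X ∩ U) = V ∩ {z | ∀ i ∉ J, z i = 0}

end StrictC1

/-- The push-forward `f_*u` of a distribution on an open `U`: `(f_*u)(φ) = u(φ ∘ f)`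
(with `φ ∘ f` cut off outside `U`). -/
def pushOn {ι ι' : Type} [Fintype ι] [Fintype ι'] (U : Set (ι → K))
    (f : (ι → K) → ι' → K) (u : ((ι → K) → ℂ) → ℂ) : ((ι' → K) → ℂ) → ℂ :=
  fun φ => u fun x => if x ∈ U then φ (f x) else 0

/-!
Smoothness at `(x₀, ξ₀)` only has to be tested on indicators of balls `B(a, m)` of valuative
radius `m = const - ord λ`, i.e. of size `≈ |λ|⁻¹`: such an indicator is an average of the
characters `x ↦ ψ((x - a)·ζ)` times the indicator of a fixed ball around `x₀`, and multiplying by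
`ψ(x·ζ)` only moves the frequency `λξ` to `λ(ξ + λ⁻¹ζ)`, which stays near `ξ₀`.

On a ball of that radius strict differentiability linearises the phase: `ψ(λ f(x)·η)` equals a
constant times `ψ(λ x·ᵗA η)` with `A = Df(x₀)`, because the error term has valuation `≥ 1`, where
`ψ` is trivial. Cutting the pulled-back test function `φ₁ ∘ f` into such balls therefore writes
`F(φ₁ f_*u)(λη)` as a finite combination of `F(1_B u)(λ ᵗA η)`, which all vanish. The converse is
the same statement for `g = f⁻¹`, whose derivative at `f(x₀)` is `A⁻¹` by the chain rule.
-/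

open NALocalField Matrix

theorem WithTop.coe_add_le_of_sub_add_le {c d : ℤ} {y z w : WithTop ℤ}
    (hz : (d : WithTop ℤ) + y ≤ z) (hw : ((c - d : ℤ) : WithTop ℤ) + z ≤ w) :
    (c : WithTop ℤ) + y ≤ w :=
  calc (c : WithTop ℤ) + y = ((c - d : ℤ) : WithTop ℤ) + ((d : WithTop ℤ) + y) := by
        rw [← add_assoc, ← WithTop.coe_add, sub_add_cancel]
    _ ≤ w := (add_le_add le_rfl hz).trans hw

theorem WithTop.coe_le_add_of_sub_le {c d : ℤ} {y : WithTop ℤ} (h : ((c - d : ℤ) : WithTop ℤ) ≤ y) :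
    (c : WithTop ℤ) ≤ d + y :=
  calc (c : WithTop ℤ) = (d : WithTop ℤ) + ((c - d : ℤ) : WithTop ℤ) := by
        rw [← WithTop.coe_add, add_sub_cancel]
    _ ≤ d + y := add_le_add le_rfl h

theorem Finset.eq_sum_indicator_of_support_subset {α β M : Type} [AddCommMonoid M]
    {s : Finset β} {t : β → Set α} (h : (s : Set β).PairwiseDisjoint t) {F : α → M}
    (hF : Function.support F ⊆ ⋃ i ∈ s, t i) : F = ∑ i ∈ s, (t i).indicator F :=
  calc F = (⋃ i ∈ s, t i).indicator F := (Set.indicator_eq_self.2 hF).symm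
    _ = _ := by
      rw [Finset.indicator_biUnion s t h]
      ext x
      simp

section Valuation

variable {K : Type} [Field K] [TopologicalSpace K] [NALocalField K]

namespace NALocalField

theorem ord_zero : ord (0 : K) = ⊤ := (ord_eq_top_iff 0).2 rfl

theorem ord_one : ord (1 : K) = 0 := by
  obtain ⟨e, he⟩ := WithTop.ne_top_iff_exists.1 ((ord_eq_top_iff (1 : K)).not.2 one_ne_zero)
  have h := ord_mul (1 : K) 1
  rw [one_mul, ← he, ← WithTop.coe_add, WithTop.coe_inj] at h
  rw [← he, WithTop.coe_eq_zero]
  omega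

def addValuation : AddValuation K (WithTop ℤ) :=
  AddValuation.of ord ord_zero ord_one ord_add ord_mul

theorem ord_neg (x : K) : ord (-x) = ord x := (addValuation (K := K)).map_neg x

theorem ord_sub_comm (x y : K) : ord (x - y) = ord (y - x) := addValuation.map_sub_swap x y

theorem ord_inv (x : K) : ord x⁻¹ = -ord x := addValuation.map_inv

theorem le_ord_sum {ι : Type} {s : Finset ι} {v : ι → K} {g : WithTop ℤ}
    (h : ∀ i ∈ s, g ≤ ord (v i)) : g ≤ ord (∑ i ∈ s, v i) :=
  addValuation.map_le_sum h

theorem exists_ord_eq_of_ne_zero {x : K} (hx : x ≠ 0) : ∃ e : ℤ, ord x = e :=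
  (WithTop.ne_top_iff_exists.1 ((ord_eq_top_iff x).not.2 hx)).imp fun _ h => h.symm

theorem ne_zero_of_ord_eq {x : K} {e : ℤ} (h : ord x = e) : x ≠ 0 := by
  rintro rfl
  simp [ord_zero] at h

theorem eq_zero_of_forall_le_ord {x : K} (h : ∀ c : ℤ, (c : WithTop ℤ) ≤ ord x) : x = 0 := by
  by_contra hx
  obtain ⟨e, he⟩ := exists_ord_eq_of_ne_zero hx
  have := he ▸ h (e + 1)
  norm_cast at this
  omega

end NALocalField

instance NALocalField.t2Space : T2Space K := by
  refine t2Space_iff_nhds.2 fun x y hxy => ?_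
  obtain ⟨e, he⟩ := exists_ord_eq_of_ne_zero (sub_ne_zero.2 hxy)
  refine ⟨_, (nhds_basis x).mem_of_mem (i := e + 1) trivial,
    _, (nhds_basis y).mem_of_mem (i := e + 1) trivial, Set.disjoint_left.2 fun z hzx hzy => ?_⟩
  have h : ((e + 1 : ℤ) : WithTop ℤ) ≤ ord (x - y) := by
    rw [← sub_sub_sub_cancel_right x y z]
    exact addValuation.map_le_sub (show _ ≤ ord (x - z) by rwa [ord_sub_comm])
      (show _ ≤ ord (y - z) by rwa [ord_sub_comm])
  rw [he] at h
  norm_cast at h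
  omega

end Valuation

section OrdVec

variable {K : Type} [Field K] [TopologicalSpace K] [NALocalField K] {ι : Type} [Fintype ι]

theorem ordVec_le (v : ι → K) (i : ι) : ordVec v ≤ ord (v i) :=
  Finset.inf_le (Finset.mem_univ i)

theorem le_ordVec_iff {v : ι → K} {c : WithTop ℤ} : c ≤ ordVec v ↔ ∀ i, c ≤ ord (v i) := by
  simp [ordVec]

theorem ordVec_zero : ordVec (0 : ι → K) = ⊤ := by
  simp [ordVec, ord_zero]

theorem ordVec_neg (v : ι → K) : ordVec (-v) = ordVec v := by
  simp [ordVec, ord_neg]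

theorem ordVec_sub_comm (v w : ι → K) : ordVec (v - w) = ordVec (w - v) := by
  rw [← ordVec_neg, neg_sub]

theorem le_ordVec_add {v w : ι → K} {c : WithTop ℤ} (hv : c ≤ ordVec v) (hw : c ≤ ordVec w) :
    c ≤ ordVec (v + w) :=
  le_ordVec_iff.2 fun i => addValuation.map_le_add (hv.trans (ordVec_le v i))
    (hw.trans (ordVec_le w i))

theorem le_ordVec_sub {v w : ι → K} {c : WithTop ℤ} (hv : c ≤ ordVec v) (hw : c ≤ ordVec w) :
    c ≤ ordVec (v - w) := by
  rw [sub_eq_add_neg]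
  exact le_ordVec_add hv (by rwa [ordVec_neg])

theorem ord_add_ordVec_le_ordVec_smul (c : K) (v : ι → K) : ord c + ordVec v ≤ ordVec (c • v) :=
  le_ordVec_iff.2 fun i => by
    rw [Pi.smul_apply, smul_eq_mul, ord_mul]
    exact add_le_add_right (ordVec_le v i) _

theorem ordVec_add_ordVec_le_ord_dotProduct (v w : ι → K) : ordVec v + ordVec w ≤ ord (v ⬝ᵥ w) :=
  le_ord_sum fun i _ => by
    rw [ord_mul]
    exact add_le_add (ordVec_le v i) (ordVec_le w i)

theorem exists_le_ordVec_mulVec {ι' : Type} [Fintype ι'] (A : Matrix ι' ι K) :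
    ∃ μ : ℤ, ∀ v : ι → K, (μ : WithTop ℤ) + ordVec v ≤ ordVec (A *ᵥ v) := by
  obtain ⟨μ, hμ⟩ := Finite.exists_ge fun p : ι' × ι => (ord (A p.1 p.2)).untopD 0
  refine ⟨μ, fun v => le_ordVec_iff.2 fun i => le_ord_sum fun j _ => ?_⟩
  rw [ord_mul]
  exact add_le_add ((WithTop.coe_le_coe.2 (hμ (i, j))).trans (WithTop.coe_untopD_le _ _))
    (ordVec_le v j)

theorem exists_le_ordVec_vecMul {ι' : Type} [Fintype ι'] (A : Matrix ι ι' K) :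
    ∃ μ : ℤ, ∀ v : ι → K, (μ : WithTop ℤ) + ordVec v ≤ ordVec (v ᵥ* A) := by
  simpa only [Matrix.mulVec_transpose] using exists_le_ordVec_mulVec Aᵀ

end OrdVec

section Balls

variable {K : Type} [Field K] [TopologicalSpace K] [NALocalField K] {ι : Type} [Fintype ι]

theorem mem_pball {x y : ι → K} {r : ℤ} : y ∈ pball x r ↔ (r : WithTop ℤ) ≤ ordVec (x - y) :=
  Iff.rfl

theorem mem_pball_self (x : ι → K) (r : ℤ) : x ∈ pball x r := by
  simp [mem_pball, ordVec_zero]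

theorem mem_pball_comm {x y : ι → K} {r : ℤ} : y ∈ pball x r ↔ x ∈ pball y r := by
  rw [mem_pball, mem_pball, ordVec_sub_comm]

theorem pball_eq_of_mem {x y : ι → K} {r : ℤ} (h : y ∈ pball x r) : pball y r = pball x r := by
  ext z
  constructor <;> intro hz <;> rw [mem_pball] at *
  · simpa only [sub_add_sub_cancel] using le_ordVec_add h hz
  · simpa only [sub_sub_sub_cancel_left] using le_ordVec_sub hz h

theorem add_mem_pball_add_iff {x y z : ι → K} {r : ℤ} :
    y + z ∈ pball (x + z) r ↔ y ∈ pball x r := by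
  rw [mem_pball, mem_pball, add_sub_add_right_eq_sub]

theorem pball_anti (x : ι → K) {r r' : ℤ} (h : r ≤ r') : pball x r' ⊆ pball x r :=
  fun _ hz => (WithTop.coe_le_coe.2 h).trans hz

theorem pball_subset_pball {x y : ι → K} {r r' : ℤ} (hr : r ≤ r') (h : y ∈ pball x r) :
    pball y r' ⊆ pball x r :=
  pball_eq_of_mem h ▸ pball_anti y hr

theorem pball_eq_of_not_disjoint {a b : ι → K} {m : ℤ} (h : ¬Disjoint (pball a m) (pball b m)) :
    pball a m = pball b m := by
  obtain ⟨z, hza, hzb⟩ := Set.not_disjoint_iff.1 h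
  rw [← pball_eq_of_mem hza, pball_eq_of_mem hzb]

theorem exists_le_ordVec_of_mem_pball (η₀ : ι → K) (d : ℤ) :
    ∃ e : ℤ, ∀ η ∈ pball η₀ d, (e : WithTop ℤ) ≤ ordVec η := by
  refine ⟨min ((ordVec η₀).untopD 0) d, fun η hη => ?_⟩
  rw [← sub_sub_cancel η₀ η]
  exact le_ordVec_sub ((WithTop.coe_le_coe.2 (min_le_left _ _)).trans (WithTop.coe_untopD_le _ _))
    ((WithTop.coe_le_coe.2 (min_le_right _ _)).trans hη)

theorem add_smul_mem_pball {ξ₀ ξ ζ : ι → K} {t : K} {c : ℤ} (hξ : ξ ∈ pball ξ₀ c)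
    (h : (c : WithTop ℤ) ≤ ord t + ordVec ζ) : ξ + t • ζ ∈ pball ξ₀ c := by
  rw [mem_pball, sub_add_eq_sub_sub]
  exact le_ordVec_sub hξ (h.trans (ord_add_ordVec_le_ordVec_smul t ζ))

theorem pball_mem_nhds (x : ι → K) (r : ℤ) : pball x r ∈ 𝓝 x := by
  refine Filter.mem_of_superset (set_pi_mem_nhds Set.finite_univ fun i _ =>
    (nhds_basis (x i)).mem_of_mem (i := r) trivial) fun y hy => le_ordVec_iff.2 fun i => ?_
  rw [Pi.sub_apply, ord_sub_comm]
  exact hy i (Set.mem_univ i)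

theorem exists_pball_subset {x : ι → K} {W : Set (ι → K)} (hW : W ∈ 𝓝 x) :
    ∃ r : ℤ, pball x r ⊆ W := by
  rw [nhds_pi, Filter.mem_pi] at hW
  obtain ⟨I, -, t, ht, hsub⟩ := hW
  choose r hr using fun i => (nhds_basis (x i)).mem_iff.1 (ht i)
  obtain ⟨R, hR⟩ := Finite.exists_le r
  refine ⟨R, fun y hy => hsub fun i _ => (hr i).2 ?_⟩
  show _ ≤ ord (y i - x i)
  rw [ord_sub_comm]
  exact (WithTop.coe_le_coe.2 (hR i)).trans (hy.trans (ordVec_le _ i))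

theorem hasBasis_nhds_pball (x : ι → K) : (𝓝 x).HasBasis (fun _ : ℤ => True) (pball x) :=
  ⟨fun _ => ⟨fun hW => (exists_pball_subset hW).imp fun _ h => ⟨trivial, h⟩,
    fun ⟨r, _, h⟩ => Filter.mem_of_superset (pball_mem_nhds x r) h⟩⟩

theorem isOpen_pball (x : ι → K) (r : ℤ) : IsOpen (pball x r) :=
  isOpen_iff_mem_nhds.2 fun _ hy => pball_eq_of_mem hy ▸ pball_mem_nhds _ r

theorem isClosed_pball (x : ι → K) (r : ℤ) : IsClosed (pball x r) := by
  refine isOpen_compl_iff.1 (isOpen_iff_mem_nhds.2 fun y hy => ?_)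
  refine Filter.mem_of_superset (pball_mem_nhds y r) fun z hzy hzx => hy ?_
  rw [← pball_eq_of_mem hzx]
  exact mem_pball_comm.1 hzy

theorem isCompact_pball [IsTopologicalRing K] (x : ι → K) (r : ℤ) : IsCompact (pball x r) := by
  have h0 : pball (0 : ι → K) r = Set.univ.pi fun _ => {t | (r : WithTop ℤ) ≤ ord t} := by
    ext y
    simp [mem_pball, le_ordVec_iff, ord_neg]
  have hx : pball x r = (x - ·) '' pball 0 r := by
    ext y
    refine ⟨fun hy => ⟨x - y, ?_, sub_sub_cancel x y⟩, ?_⟩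
    · rwa [mem_pball, zero_sub, ordVec_neg]
    · rintro ⟨z, hz, rfl⟩
      rw [mem_pball, zero_sub, ordVec_neg] at hz
      rwa [mem_pball, sub_sub_cancel]
  rw [hx, h0]
  exact (isCompact_univ_pi fun _ => isCompact_ball r).image (continuous_const.sub continuous_id)

theorem IsCompact.exists_pairwiseDisjoint_pball_cover {S : Set (ι → K)} (hS : IsCompact S)
    (m : ℤ) : ∃ R : Finset (ι → K), ↑R ⊆ S ∧ S ⊆ ⋃ a ∈ R, pball a m ∧
      (R : Set (ι → K)).PairwiseDisjoint (pball · m) := by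
  obtain ⟨t, htS, hcov⟩ := hS.elim_nhds_subcover (pball · m) fun x _ => pball_mem_nhds x m
  obtain ⟨R, hRC, hmin⟩ := (t.powerset.filter fun R => S ⊆ ⋃ a ∈ R, pball a m).exists_min_image
    Finset.card ⟨t, Finset.mem_filter.2 ⟨Finset.mem_powerset_self t, hcov⟩⟩
  obtain ⟨hRt, hRcov⟩ := Finset.mem_filter.1 hRC
  refine ⟨R, fun a ha => htS a (Finset.mem_powerset.1 hRt ha), hRcov, fun a ha b hb hab => ?_⟩
  by_contra hdis
  -- two balls of `R` that meet coincide, so `R.erase b` is a smaller cover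
  have hcov' : S ⊆ ⋃ c ∈ R.erase b, pball c m := by
    intro z hz
    obtain ⟨c, hc, hzc⟩ := Set.mem_iUnion₂.1 (hRcov hz)
    by_cases hcb : c = b
    · subst hcb
      exact Set.mem_iUnion₂.2 ⟨a, Finset.mem_erase.2 ⟨hab, ha⟩, pball_eq_of_not_disjoint hdis ▸ hzc⟩
    · exact Set.mem_iUnion₂.2 ⟨c, Finset.mem_erase.2 ⟨hcb, hc⟩, hzc⟩
  have hle := hmin (R.erase b) (Finset.mem_filter.2
    ⟨Finset.mem_powerset.2 ((R.erase_subset b).trans (Finset.mem_powerset.1 hRt)), hcov'⟩)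
  exact (Finset.card_erase_lt_of_mem hb).not_ge hle

theorem IsLocallyConstant.exists_apply_eq_of_mem_pball {β : Type} [Zero β] {φ : (ι → K) → β}
    (hφ : IsLocallyConstant φ) (hcs : HasCompactSupport φ) :
    ∃ m₀ : ℤ, ∀ m, m₀ ≤ m → ∀ a, ∀ x ∈ pball a m, φ x = φ a := by
  choose r hr using fun x => exists_pball_subset (hφ.eventually_eq x)
  obtain ⟨t, -, hcov⟩ := hcs.elim_nhds_subcover (fun x => pball x (r x))
    fun x _ => pball_mem_nhds x (r x)
  obtain ⟨m₀, hm₀⟩ := Finset.exists_le (t.image r)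
  refine ⟨m₀, fun m hm a x hx => ?_⟩
  by_cases hz : ∃ z ∈ pball a m, z ∈ tsupport φ
  · obtain ⟨z, hza, hzs⟩ := hz
    obtain ⟨c, hct, hzc⟩ := Set.mem_iUnion₂.1 (hcov hzs)
    have hsub : pball a m ⊆ pball c (r c) := by
      rw [← pball_eq_of_mem hza]
      exact pball_subset_pball ((hm₀ _ (Finset.mem_image_of_mem r hct)).trans hm) hzc
    rw [hr c (hsub hx), hr c (hsub (mem_pball_self a m))]
  · simp only [not_exists, not_and] at hz
    rw [image_eq_zero_of_notMem_tsupport (hz x hx),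
      image_eq_zero_of_notMem_tsupport (hz a (mem_pball_self a m))]

end Balls

section SchwartzBruhat

variable {α : Type} [TopologicalSpace α] {U : Set α}

theorem IsSBOn.zero : IsSBOn U (0 : α → ℂ) :=
  ⟨IsLocallyConstant.const 0, .zero, by simp only [tsupport_zero, Set.empty_subset]⟩

theorem IsSBOn.add {φ φ' : α → ℂ} (h : IsSBOn U φ) (h' : IsSBOn U φ') : IsSBOn U (φ + φ') :=
  ⟨h.1.add h'.1, h.2.1.add h'.2.1, (tsupport_add φ φ').trans (Set.union_subset h.2.2 h'.2.2)⟩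

theorem IsSBOn.const_smul {φ : α → ℂ} (hφ : IsSBOn U φ) (c : ℂ) : IsSBOn U (c • φ) :=
  ⟨hφ.1.comp (c • ·), hφ.2.1.smul_left (f := fun _ => c),
    (tsupport_smul_subset_right (fun _ => c) φ).trans hφ.2.2⟩

theorem IsSBOn.sum {β : Type} {s : Finset β} {φ : β → α → ℂ} (h : ∀ b ∈ s, IsSBOn U (φ b)) :
    IsSBOn U (∑ b ∈ s, φ b) :=
  Finset.sum_induction _ _ (fun _ _ => IsSBOn.add) IsSBOn.zero h

theorem IsSBOn.mul_isLocallyConstant {φ w : α → ℂ} (hφ : IsSBOn U φ) (hw : IsLocallyConstant w) :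
    IsSBOn U (φ * w) :=
  ⟨hφ.1.mul hw, hφ.2.1.mul_right, tsupport_mul_subset_left.trans hφ.2.2⟩

theorem IsDistributionOn.map_sum_smul {u : (α → ℂ) → ℂ} (hu : IsDistributionOn U u)
    {β : Type} (s : Finset β) (c : β → ℂ) {φ : β → α → ℂ} (h : ∀ b ∈ s, IsSBOn U (φ b)) :
    u (∑ b ∈ s, c b • φ b) = ∑ b ∈ s, c b * u (φ b) := by
  induction s using Finset.induction_on with
  | empty => simpa using hu.1 0 0 IsSBOn.zero
  | insert b s hb ih =>
    have hs : ∀ b' ∈ s, IsSBOn U (φ b') := fun b' hb' => h b' (Finset.mem_insert_of_mem hb')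
    have hb' := h b (Finset.mem_insert_self b s)
    rw [Finset.sum_insert hb, Finset.sum_insert hb, hu.2 _ _ (hb'.const_smul _)
      (IsSBOn.sum fun b' hb' => (hs b' hb').const_smul _), hu.1 _ _ hb', ih hs]

end SchwartzBruhat

section Characters

variable {K : Type} [Field K] [TopologicalSpace K] [NALocalField K] {ι : Type} [Fintype ι]
  {ψ : AddChar K ℂ}

theorem isSBOn_indicator_pball [IsTopologicalRing K] {U : Set (ι → K)} {a : ι → K} {m : ℤ}
    (h : pball a m ⊆ U) : IsSBOn U ((pball a m).indicator 1) := by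
  have hts : tsupport ((pball a m).indicator (1 : (ι → K) → ℂ)) ⊆ pball a m :=
    closure_minimal Set.support_indicator_subset (isClosed_pball a m)
  refine ⟨?_, (isCompact_pball a m).of_isClosed_subset isClosed_closure hts, hts.trans h⟩
  rw [← LocallyConstant.coe_charFn ℂ ⟨isClosed_pball a m, isOpen_pball a m⟩]
  exact LocallyConstant.isLocallyConstant _

theorem IsStandardChar.apply_eq_of_one_le_ord_sub (hψ : IsStandardChar ψ) {s t : K}
    (h : 1 ≤ ord (s - t)) : ψ s = ψ t := by
  rw [← sub_add_cancel s t, AddChar.map_add_eq_mul, hψ.1 _ h, one_mul]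

theorem IsStandardChar.isLocallyConstant_dotProduct [IsTopologicalRing K]
    (hψ : IsStandardChar ψ) (ξ : ι → K) : IsLocallyConstant fun x : ι → K => ψ (x ⬝ᵥ ξ) := by
  have hψlc : IsLocallyConstant ψ := (IsLocallyConstant.iff_eventually_eq _).2 fun t =>
    Filter.eventually_of_mem ((nhds_basis t).mem_of_mem (i := 1) trivial) fun _ hs =>
      hψ.apply_eq_of_one_le_ord_sub hs
  exact hψlc.comp_continuous (continuous_id.dotProduct continuous_const)

theorem IsStandardChar.apply_dotProduct_eq_of_mem_pball (hψ : IsStandardChar ψ) {κ : ℤ}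
    {w ζ ζ' : ι → K} (hw : (κ : WithTop ℤ) ≤ ordVec w) (h : ζ' ∈ pball ζ (1 - κ)) :
    ψ (w ⬝ᵥ ζ') = ψ (w ⬝ᵥ ζ) := by
  refine hψ.apply_eq_of_one_le_ord_sub ?_
  rw [← dotProduct_sub]
  refine le_trans ?_ (ordVec_add_ordVec_le_ord_dotProduct w _)
  rw [mem_pball, ordVec_sub_comm] at h
  calc (1 : WithTop ℤ) = ((κ + (1 - κ) : ℤ) : WithTop ℤ) := by norm_num
    _ ≤ _ := by rw [WithTop.coe_add]; exact add_le_add hw h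

theorem IsStandardChar.exists_apply_dotProduct_ne_one (hψ : IsStandardChar ψ) {w : ι → K}
    {m : ℤ} (h : ¬(m : WithTop ℤ) ≤ ordVec w) :
    ∃ ζ : ι → K, ((1 - m : ℤ) : WithTop ℤ) ≤ ordVec ζ ∧ ψ (w ⬝ᵥ ζ) ≠ 1 := by
  obtain ⟨i, hi⟩ : ∃ i, ord (w i) < m := by simpa [le_ordVec_iff] using h
  obtain ⟨e, he⟩ := exists_ord_eq_of_ne_zero (K := K) (x := w i) (by
    rintro h0; simp [h0, ord_zero] at hi)
  obtain ⟨t, ht, hψt⟩ := hψ.2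
  refine ⟨Pi.single i (t * (w i)⁻¹), le_ordVec_iff.2 fun j => ?_, ?_⟩
  · rcases eq_or_ne j i with rfl | hj
    · rw [Pi.single_eq_same, ord_mul, ord_inv, he]
      rw [he] at hi
      norm_cast at hi
      calc ((1 - m : ℤ) : WithTop ℤ) ≤ 0 + ((-e : ℤ) : WithTop ℤ) := by
            rw [zero_add]; exact_mod_cast (by omega)
        _ ≤ _ := add_le_add ht le_rfl
    · simp [Pi.single_eq_of_ne hj, ord_zero]
  · rwa [dotProduct_single, mul_left_comm, mul_inv_cancel₀ (ne_zero_of_ord_eq he), mul_one]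

theorem IsStandardChar.sum_apply_dotProduct (hψ : IsStandardChar ψ) {κ m : ℤ}
    {R : Finset (ι → K)} (hRS : (R : Set (ι → K)) ⊆ pball 0 (1 - m))
    (hRcov : pball 0 (1 - m) ⊆ ⋃ z ∈ R, pball z (1 - κ))
    (hRdisj : (R : Set (ι → K)).PairwiseDisjoint (pball · (1 - κ))) {w : ι → K}
    (hw : (κ : WithTop ℤ) ≤ ordVec w) :
    ∑ ζ ∈ R, ψ (w ⬝ᵥ ζ) = if (m : WithTop ℤ) ≤ ordVec w then (R.card : ℂ) else 0 := by
  split_ifs with hm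
  · rw [Finset.sum_congr rfl fun ζ hζ => hψ.apply_dotProduct_eq_of_mem_pball hm (hRS hζ)]
    simp
  -- translating by `ζ₀` permutes the balls of the cover and multiplies the sum by
  -- `ψ (w ⬝ᵥ ζ₀) ≠ 1`
  obtain ⟨ζ₀, hζ₀, hψζ₀⟩ := hψ.exists_apply_dotProduct_ne_one hm
  have hmem : ∀ ζ ∈ R, ζ + ζ₀ ∈ pball 0 (1 - m) := fun ζ hζ => by
    have hζ' := hRS hζ
    rw [mem_pball, zero_sub, ordVec_neg] at hζ' ⊢
    exact le_ordVec_add hζ' hζ₀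
  choose! τ hτR hτ using fun ζ hζ => Set.mem_iUnion₂.1 (hRcov (hmem ζ hζ))
  have hτinj : Set.InjOn τ R := fun ζ₁ h₁ ζ₂ h₂ heq => by
    have h : ζ₁ + ζ₀ ∈ pball (ζ₂ + ζ₀) (1 - κ) := by
      rw [pball_eq_of_mem (hτ ζ₂ h₂), ← heq]
      exact hτ ζ₁ h₁
    exact hRdisj.elim h₁ h₂ (Set.not_disjoint_iff.2
      ⟨ζ₁, mem_pball_self _ _, add_mem_pball_add_iff.1 h⟩)
  have hτψ : ∀ ζ ∈ R, ψ (w ⬝ᵥ τ ζ) = ψ (w ⬝ᵥ ζ) * ψ (w ⬝ᵥ ζ₀) := fun ζ hζ => by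
    rw [hψ.apply_dotProduct_eq_of_mem_pball hw (mem_pball_comm.1 (hτ ζ hζ)), dotProduct_add,
      AddChar.map_add_eq_mul]
  have himage : R.image τ = R := Finset.eq_of_subset_of_card_le
    (Finset.image_subset_iff.2 hτR) (Finset.card_image_of_injOn hτinj).ge
  have hS : (∑ ζ ∈ R, ψ (w ⬝ᵥ ζ)) * (ψ (w ⬝ᵥ ζ₀) - 1) = 0 := by
    rw [mul_sub_one, Finset.sum_mul, ← Finset.sum_congr rfl hτψ,
      ← Finset.sum_image (f := fun ζ => ψ (w ⬝ᵥ ζ)) hτinj,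
      himage, sub_self]
  exact (mul_eq_zero.1 hS).resolve_right (sub_ne_zero.2 hψζ₀)

theorem IsStandardChar.exists_indicator_pball_eq_sum [IsTopologicalRing K]
    (hψ : IsStandardChar ψ) (x₀ : ι → K) {κ m : ℤ} (hκm : κ ≤ m) :
    ∃ R : Finset (ι → K), (R : Set (ι → K)) ⊆ pball 0 (1 - m) ∧ ∀ a ∈ pball x₀ κ,
      (pball a m).indicator 1 = ∑ ζ ∈ R, ((R.card : ℂ)⁻¹ * ψ (-(a ⬝ᵥ ζ))) •
        ((pball x₀ κ).indicator 1 * fun x => ψ (x ⬝ᵥ ζ)) := by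
  obtain ⟨R, hRS, hRcov, hRdisj⟩ :=
    (isCompact_pball (0 : ι → K) (1 - m)).exists_pairwiseDisjoint_pball_cover (1 - κ)
  have hR : (R.card : ℂ) ≠ 0 := by
    obtain ⟨z, hz, -⟩ := Set.mem_iUnion₂.1 (hRcov (mem_pball_self 0 _))
    exact Nat.cast_ne_zero.2 (Finset.card_ne_zero.2 ⟨z, hz⟩)
  refine ⟨R, hRS, fun a ha => funext fun x => ?_⟩
  simp only [Finset.sum_apply, Pi.smul_apply, Pi.mul_apply, smul_eq_mul]
  by_cases hx : x ∈ pball x₀ κ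
  · have hxa : (κ : WithTop ℤ) ≤ ordVec (x - a) := by
      simpa only [sub_sub_sub_cancel_left] using le_ordVec_sub ha hx
    have hsum := hψ.sum_apply_dotProduct hRS hRcov hRdisj hxa
    calc (pball a m).indicator 1 x = (R.card : ℂ)⁻¹ * ∑ ζ ∈ R, ψ ((x - a) ⬝ᵥ ζ) := by
          rw [hsum, Set.indicator_apply, mem_pball, ordVec_sub_comm]
          split_ifs <;> simp [hR]
      _ = _ := by
          rw [Finset.mul_sum]
          refine Finset.sum_congr rfl fun ζ _ => ?_
          rw [Set.indicator_of_mem hx, sub_dotProduct, sub_eq_neg_add, AddChar.map_add_eq_mul]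
          simp only [Pi.one_apply]
          ring
  · have hxa : x ∉ pball a m := fun h => hx (pball_subset_pball hκm ha h)
    simp [hx, hxa]

end Characters

theorem FTrans_eq_mul {K : Type} [Field K] {ι : Type} [Fintype ι] (ψ : AddChar K ℂ)
    (u : ((ι → K) → ℂ) → ℂ) (φ : (ι → K) → ℂ) (ξ : ι → K) :
    FTrans ψ u φ ξ = u (φ * fun x => ψ (x ⬝ᵥ ξ)) :=
  rfl

section Microlocal

variable {K : Type} [Field K] [TopologicalSpace K] [NALocalField K] {ι : Type} [Fintype ι]
  {ψ : AddChar K ℂ} {Λ : Set K} {U : Set (ι → K)} {u : ((ι → K) → ℂ) → ℂ}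

theorem LamSmoothAt.congr [IsTopologicalRing K] (hψ : IsStandardChar ψ)
    {u' : ((ι → K) → ℂ) → ℂ} (h : ∀ φ, IsSBOn U φ → u φ = u' φ) {x₀ ξ₀ : ι → K}
    (hs : LamSmoothAt ψ Λ U u x₀ ξ₀) : LamSmoothAt ψ Λ U u' x₀ ξ₀ := by
  obtain ⟨U₀, V₀, hU₀, hV₀, hx, hξ, hsmooth⟩ := hs
  refine ⟨U₀, V₀, hU₀, hV₀, hx, hξ, fun φ hφ hsupp => ?_⟩
  obtain ⟨N, hN⟩ := hsmooth φ hφ hsupp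
  exact ⟨N, fun lam hlam hord ξ hξ => (h _ (hφ.mul_isLocallyConstant
    (hψ.isLocallyConstant_dotProduct (lam • ξ)))).symm.trans (hN lam hlam hord ξ hξ)⟩

theorem LamSmoothAt.exists_FTrans_indicator_pball_eq_zero [IsTopologicalRing K]
    (hψ : IsStandardChar ψ) (hU : IsOpen U) (hu : IsDistributionOn U u) {x₀ ξ₀ : ι → K}
    (hx₀ : x₀ ∈ U) (h : LamSmoothAt ψ Λ U u x₀ ξ₀) :
    ∃ κ c N : ℤ, pball x₀ κ ⊆ U ∧ ∀ lam ∈ Λ, ∀ ℓ : ℤ, ord lam = ℓ → ℓ < N →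
      ∀ a ∈ pball x₀ κ, ∀ ξ ∈ pball ξ₀ c,
        FTrans ψ u ((pball a (1 - c - ℓ)).indicator 1) (lam • ξ) = 0 := by
  obtain ⟨U₀, V₀, hU₀, hV₀, hxU₀, hξV₀, hsmooth⟩ := h
  obtain ⟨κ, hκ⟩ := exists_pball_subset ((hU₀.inter hU).mem_nhds ⟨hxU₀, hx₀⟩)
  obtain ⟨c, hc⟩ := exists_pball_subset (hV₀.mem_nhds hξV₀)
  have hκU : pball x₀ κ ⊆ U := hκ.trans Set.inter_subset_right
  have hφ₀ := isSBOn_indicator_pball hκU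
  obtain ⟨N, hN⟩ := hsmooth _ hφ₀ ((isSBOn_indicator_pball hκ).2.2.trans Set.inter_subset_left)
  refine ⟨κ, c, min N (1 - c - κ), hκU, fun lam hlam ℓ hℓ hℓN a ha ξ hξ => ?_⟩
  have hlam0 : lam ≠ 0 := ne_zero_of_ord_eq hℓ
  obtain ⟨R, hR, hind⟩ := hψ.exists_indicator_pball_eq_sum x₀ (κ := κ) (m := 1 - c - ℓ)
    (by have := hℓN.trans_le (min_le_right _ _); omega)
  have hshift : ∀ ζ ∈ R, ξ + lam⁻¹ • ζ ∈ V₀ := fun ζ hζ => by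
    have hζ' := hR hζ
    rw [mem_pball, zero_sub, ordVec_neg] at hζ'
    refine hc (add_smul_mem_pball hξ ?_)
    rw [ord_inv, hℓ]
    exact WithTop.coe_le_add_of_sub_le (d := -ℓ) (by convert hζ' using 2; ring)
  have hprod : (pball a (1 - c - ℓ)).indicator 1 * (fun x => ψ (x ⬝ᵥ lam • ξ)) =
      ∑ ζ ∈ R, ((R.card : ℂ)⁻¹ * ψ (-(a ⬝ᵥ ζ))) •
        ((pball x₀ κ).indicator 1 * fun x => ψ (x ⬝ᵥ lam • (ξ + lam⁻¹ • ζ))) := by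
    rw [hind a ha, Finset.sum_mul]
    refine Finset.sum_congr rfl fun ζ _ => funext fun x => ?_
    simp only [Pi.mul_apply, Pi.smul_apply, smul_eq_mul]
    rw [smul_add, smul_smul, mul_inv_cancel₀ hlam0, one_smul, dotProduct_add,
      AddChar.map_add_eq_mul]
    ring
  rw [FTrans_eq_mul, hprod, hu.map_sum_smul _ _ fun ζ _ =>
    hφ₀.mul_isLocallyConstant (hψ.isLocallyConstant_dotProduct _)]
  exact Finset.sum_eq_zero fun ζ hζ => mul_eq_zero_of_right _ (hN lam hlam
    (by rw [hℓ]; exact_mod_cast hℓN.trans_le (min_le_left _ _)) _ (hshift ζ hζ))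

end Microlocal

section StrictDeriv

variable {K : Type} [Field K] [TopologicalSpace K] [NALocalField K] {ι ι' : Type} [Fintype ι]
  [Fintype ι'] {f : (ι → K) → ι' → K} {A : Matrix ι' ι K} {s : Set (ι → K)} {a : ι → K}

theorem HasStrictDerivWithin.exists_pball (h : HasStrictDerivWithin f A s a) (c : ℤ) :
    ∃ r : ℤ, ∀ x ∈ pball a r ∩ s, ∀ y ∈ pball a r ∩ s,
      (c : WithTop ℤ) + ordVec (x - y) ≤ ordVec (f x - f y - A *ᵥ (x - y)) := by
  obtain ⟨W, hW, hWs⟩ := (eventually_nhdsWithin_iff.1 (h c)).exists_mem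
  obtain ⟨w₁, hw₁, w₂, hw₂, hsub⟩ := mem_nhds_prod_iff.1 hW
  obtain ⟨r, hr⟩ := exists_pball_subset (Filter.inter_mem hw₁ hw₂)
  exact ⟨r, fun x hx y hy => hWs (x, y) (hsub ⟨(hr hx.1).1, (hr hy.1).2⟩) ⟨hx.2, hy.2⟩⟩

theorem HasStrictDerivWithin.eventually_le (h : HasStrictDerivWithin f A s a) (ha : a ∈ s)
    (c : ℤ) :
    ∀ᶠ x in 𝓝[s] a, (c : WithTop ℤ) + ordVec (x - a) ≤ ordVec (f x - f a - A *ᵥ (x - a)) := by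
  obtain ⟨r, hr⟩ := h.exists_pball c
  filter_upwards [inter_mem_nhdsWithin s (pball_mem_nhds a r)] with x hx
  exact hr x ⟨hx.2, hx.1⟩ a ⟨mem_pball_self a r, ha⟩

theorem HasStrictDerivWithin.exists_eventually_le_ordVec_sub (h : HasStrictDerivWithin f A s a)
    (ha : a ∈ s) :
    ∃ μ : ℤ, ∀ᶠ x in 𝓝[s] a, (μ : WithTop ℤ) + ordVec (x - a) ≤ ordVec (f x - f a) := by
  obtain ⟨μ, hμ⟩ := exists_le_ordVec_mulVec A
  refine ⟨min μ 0, (h.eventually_le ha 0).mono fun x hx => ?_⟩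
  rw [← sub_add_cancel (f x - f a) (A *ᵥ (x - a))]
  exact le_ordVec_add ((add_le_add_left (WithTop.coe_le_coe.2 (min_le_right μ 0)) _).trans hx)
    ((add_le_add_left (WithTop.coe_le_coe.2 (min_le_left μ 0)) _).trans (hμ _))

theorem HasStrictDerivWithin.continuousWithinAt (h : HasStrictDerivWithin f A s a) (ha : a ∈ s) :
    ContinuousWithinAt f s a := by
  obtain ⟨μ, hμ⟩ := h.exists_eventually_le_ordVec_sub ha
  refine (hasBasis_nhds_pball (f a)).tendsto_right_iff.2 fun ρ _ => ?_
  filter_upwards [hμ, nhdsWithin_le_nhds (pball_mem_nhds a (ρ - μ))] with x hx hxa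
  rw [mem_pball, ordVec_sub_comm] at hxa ⊢
  exact (WithTop.coe_le_add_of_sub_le hxa).trans hx

theorem StrictC1Within.continuousOn (hf : StrictC1Within f s) : ContinuousOn f s := fun a ha =>
  let ⟨_, hA⟩ := hf a ha
  hA.continuousWithinAt ha

theorem Matrix.eq_one_of_forall_eventually_le_ordVec [DecidableEq ι] {M : Matrix ι ι K} {a : ι → K}
    (h : ∀ c : ℤ, ∀ᶠ x in 𝓝 a,
      (c : WithTop ℤ) + ordVec (x - a) ≤ ordVec (M *ᵥ (x - a) - (x - a))) : M = 1 := by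
  refine Matrix.ext_of_mulVec_single fun j => ?_
  rw [Matrix.one_mulVec, ← sub_eq_zero]
  refine funext fun i => eq_zero_of_forall_le_ord fun c => ?_
  obtain ⟨r, hr⟩ := exists_pball_subset (h c)
  obtain ⟨t, ht⟩ := ord_surjective (K := K) r
  have htj : (r : WithTop ℤ) ≤ ordVec (t • Pi.single j 1 : ι → K) := le_ordVec_iff.2 fun k => by
    rcases eq_or_ne k j with rfl | hkj <;> simp [*, ord_zero]
  have hball : a + (t • Pi.single j 1 : ι → K) ∈ pball a r := by
    rwa [mem_pball, sub_add_cancel_left, ordVec_neg]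
  have hi := (hr hball).trans (ordVec_le _ i)
  rw [add_sub_cancel_left, Matrix.mulVec_smul, ← smul_sub, Pi.smul_apply, smul_eq_mul, ord_mul,
    ht] at hi
  have hcr := (add_le_add le_rfl htj).trans hi
  rw [add_comm (c : WithTop ℤ)] at hcr
  exact (WithTop.add_le_add_iff_left WithTop.coe_ne_top).1 hcr

theorem HasStrictDerivWithin.mul_eq_one_of_leftInvOn [DecidableEq ι] {g : (ι' → K) → ι → K}
    {B : Matrix ι ι' K} {t : Set (ι' → K)} (hs : IsOpen s) (ha : a ∈ s)
    (hA : HasStrictDerivWithin f A s a) (hB : HasStrictDerivWithin g B t (f a))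
    (hft : Set.MapsTo f s t) (hgf : ∀ x ∈ s, g (f x) = x) : B * A = 1 := by
  refine Matrix.eq_one_of_forall_eventually_le_ordVec (a := a) fun c => ?_
  obtain ⟨μB, hμB⟩ := exists_le_ordVec_mulVec B
  obtain ⟨μ, hμ⟩ := hA.exists_eventually_le_ordVec_sub ha
  have hf : Tendsto f (𝓝[s] a) (𝓝[t] (f a)) := tendsto_nhdsWithin_iff.2
    ⟨hA.continuousWithinAt ha, eventually_mem_nhdsWithin.mono fun _ hx => hft hx⟩
  rw [← nhdsWithin_eq_nhds.2 (hs.mem_nhds ha)]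
  filter_upwards [hA.eventually_le ha (c - μB), hμ,
    hf.eventually (hB.eventually_le (hft ha) (c - μ)), self_mem_nhdsWithin] with x hA' hμ' hB' hx
  rw [hgf x hx, hgf a ha] at hB'
  have hid : (B * A) *ᵥ (x - a) - (x - a) =
      -(B *ᵥ (f x - f a - A *ᵥ (x - a))) - (x - a - B *ᵥ (f x - f a)) := by
    simp only [← Matrix.mulVec_mulVec, Matrix.mulVec_sub]
    abel
  rw [hid]
  refine le_ordVec_sub ?_ (WithTop.coe_add_le_of_sub_add_le hμ' hB')
  rw [ordVec_neg]
  exact WithTop.coe_add_le_of_sub_add_le hA' (by rw [sub_sub_cancel]; exact hμB _)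

end StrictDeriv

section Pullback

variable {α β : Type} [TopologicalSpace α] [TopologicalSpace β] {U : Set α} {U₁ : Set β}
  {f : α → β} {g : β → α} {φ : β → ℂ}

theorem tsupport_indicator_comp_subset [T2Space α] (hgf : ∀ x ∈ U, g (f x) = x)
    (hg : ContinuousOn g U₁) (hφ : IsSBOn U₁ φ) :
    tsupport (U.indicator (φ ∘ f)) ⊆ g '' tsupport φ := by
  refine closure_minimal (fun x hx => ?_) (hφ.2.1.image_of_continuousOn (hg.mono hφ.2.2)).isClosed
  rw [Set.support_indicator] at hx
  exact ⟨f x, subset_closure hx.2, hgf x hx.1⟩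

theorem IsSBOn.indicator_comp [T2Space α] (hU : IsOpen U) (hgU : Set.MapsTo g U₁ U)
    (hgf : ∀ x ∈ U, g (f x) = x) (hf : ContinuousOn f U) (hg : ContinuousOn g U₁)
    (hφ : IsSBOn U₁ φ) : IsSBOn U (U.indicator (φ ∘ f)) := by
  have hts := tsupport_indicator_comp_subset hgf hg hφ
  have htsU : tsupport (U.indicator (φ ∘ f)) ⊆ U :=
    hts.trans (Set.image_subset_iff.2 fun _ hz => hgU (hφ.2.2 hz))
  refine ⟨(IsLocallyConstant.iff_eventually_eq _).2 fun x => ?_,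
    (hφ.2.1.image_of_continuousOn (hg.mono hφ.2.2)).of_isClosed_subset isClosed_closure hts, htsU⟩
  by_cases hx : x ∈ U
  · filter_upwards [hU.mem_nhds hx,
      (hf.continuousAt (hU.mem_nhds hx)).eventually (hφ.1.eventually_eq (f x))] with y hy hφy
    simp [Set.indicator_of_mem hy, Set.indicator_of_mem hx, hφy]
  · filter_upwards [notMem_tsupport_iff_eventuallyEq.1 fun h => hx (htsU h)] with y hy
    rw [hy, Set.indicator_of_notMem hx, Pi.zero_apply]

end Pullback

section PushForward

variable {K : Type} {ι : Type} [Fintype ι] {U U₁ : Set (ι → K)} {f g : (ι → K) → ι → K}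
  {u : ((ι → K) → ℂ) → ℂ}

theorem IsDistributionOn.pushOn [Field K] [TopologicalSpace K] [NALocalField K] (hU : IsOpen U)
    (hgU : Set.MapsTo g U₁ U) (hgf : ∀ x ∈ U, g (f x) = x) (hf : ContinuousOn f U)
    (hg : ContinuousOn g U₁)
    (hu : IsDistributionOn U u) : IsDistributionOn U₁ (pushOn U f u) := by
  have hpull {φ} (hφ : IsSBOn U₁ φ) := hφ.indicator_comp hU hgU hgf hf hg
  refine ⟨fun c φ hφ => ?_, fun φ φ' hφ hφ' => ?_⟩
  · show u (U.indicator ((c • φ) ∘ f)) = c * u (U.indicator (φ ∘ f))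
    rw [← hu.1 c _ (hpull hφ)]
    congr 1
    ext x
    by_cases hx : x ∈ U <;> simp [hx]
  · show u (U.indicator ((φ + φ') ∘ f)) = u (U.indicator (φ ∘ f)) + u (U.indicator (φ' ∘ f))
    rw [← hu.2 _ _ (hpull hφ) (hpull hφ')]
    congr 1
    ext x
    by_cases hx : x ∈ U <;> simp [hx]

theorem pushOn_mul (φ w : (ι → K) → ℂ) :
    pushOn U f u (φ * w) = u (U.indicator (φ ∘ f) * (w ∘ f)) := by
  show u (U.indicator ((φ * w) ∘ f)) = _
  congr 1
  ext x
  by_cases hx : x ∈ U <;> simp [hx]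

theorem pushOn_pushOn_of_tsupport_subset [TopologicalSpace K] (hfU : Set.MapsTo f U U₁)
    (hgf : ∀ x ∈ U, g (f x) = x) {φ : (ι → K) → ℂ} (hφ : tsupport φ ⊆ U) :
    pushOn U₁ g (pushOn U f u) φ = u φ := by
  show u (U.indicator (U₁.indicator (φ ∘ g) ∘ f)) = u φ
  congr 1
  ext x
  by_cases hx : x ∈ U
  · simp [hx, hfU hx, hgf x hx]
  · rw [Set.indicator_of_notMem hx, image_eq_zero_of_notMem_tsupport fun h => hx (hφ h)]

end PushForward

section Linearization

variable {K : Type} [Field K] [TopologicalSpace K] [NALocalField K] {ι ι' : Type} [Fintype ι]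
  [Fintype ι'] {ψ : AddChar K ℂ}

theorem IsStandardChar.apply_dotProduct_smul_eq (hψ : IsStandardChar ψ) {A : Matrix ι' ι K}
    {x a : ι → K} {y b η : ι' → K} {lam : K}
    (h : 1 ≤ ord lam + (ordVec (y - b - A *ᵥ (x - a)) + ordVec η)) :
    ψ (y ⬝ᵥ lam • η) = ψ (lam * (b ⬝ᵥ η - a ⬝ᵥ (η ᵥ* A))) * ψ (x ⬝ᵥ lam • (η ᵥ* A)) := by
  rw [← AddChar.map_add_eq_mul]
  refine hψ.apply_eq_of_one_le_ord_sub ?_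
  have hA : (A *ᵥ (x - a)) ⬝ᵥ η = x ⬝ᵥ (η ᵥ* A) - a ⬝ᵥ (η ᵥ* A) := by
    rw [dotProduct_comm, Matrix.dotProduct_mulVec, dotProduct_comm, sub_dotProduct]
  have hdiff : y ⬝ᵥ lam • η - (lam * (b ⬝ᵥ η - a ⬝ᵥ (η ᵥ* A)) + x ⬝ᵥ lam • (η ᵥ* A)) =
      lam * ((y - b - A *ᵥ (x - a)) ⬝ᵥ η) := by
    simp only [sub_dotProduct, hA, dotProduct_smul, smul_eq_mul]
    ring
  rw [hdiff, ord_mul]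
  exact h.trans (add_le_add le_rfl (ordVec_add_ordVec_le_ord_dotProduct _ _))

theorem IsStandardChar.indicator_pball_mul_eq_smul (hψ : IsStandardChar ψ)
    {φ : (ι → K) → ℂ} {f : (ι → K) → ι' → K} {A : Matrix ι' ι K} {a : ι → K} {η : ι' → K}
    {lam : K} {m : ℤ} (hφ : ∀ x ∈ pball a m, φ x = φ a)
    (hf : ∀ x ∈ pball a m, 1 ≤ ord lam + (ordVec (f x - f a - A *ᵥ (x - a)) + ordVec η)) :
    (pball a m).indicator (φ * fun x => ψ (f x ⬝ᵥ lam • η)) =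
      (φ a * ψ (lam * (f a ⬝ᵥ η - a ⬝ᵥ (η ᵥ* A)))) •
        ((pball a m).indicator 1 * fun x => ψ (x ⬝ᵥ lam • (η ᵥ* A))) := by
  ext x
  by_cases hx : x ∈ pball a m
  · simp only [Set.indicator_of_mem hx, Pi.mul_apply, Pi.smul_apply, Pi.one_apply, smul_eq_mul,
      hφ x hx, hψ.apply_dotProduct_smul_eq (hf x hx)]
    ring
  · simp [hx]

end Linearization

section Forward

variable {K : Type} [Field K] [TopologicalSpace K] [NALocalField K] {ι ι' : Type} [Fintype ι]
  [Fintype ι'] {ψ : AddChar K ℂ} {Λ : Set K} {U : Set (ι → K)} {u : ((ι → K) → ℂ) → ℂ}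

theorem IsDistributionOn.apply_mul_char_comp_eq_zero [IsTopologicalRing K]
    (hψ : IsStandardChar ψ) (hu : IsDistributionOn U u) {φ : (ι → K) → ℂ}
    {f : (ι → K) → ι' → K} {A : Matrix ι' ι K} {x₀ : ι → K} {η : ι' → K} {lam : K} {κ m : ℤ}
    (hκU : pball x₀ κ ⊆ U) (hκm : κ ≤ m) (hφ : tsupport φ ⊆ pball x₀ κ)
    (hφm : ∀ a, ∀ x ∈ pball a m, φ x = φ a)
    (hf : ∀ a ∈ pball x₀ κ, ∀ x ∈ pball a m,
      1 ≤ ord lam + (ordVec (f x - f a - A *ᵥ (x - a)) + ordVec η))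
    (hu₀ : ∀ a ∈ pball x₀ κ, FTrans ψ u ((pball a m).indicator 1) (lam • (η ᵥ* A)) = 0) :
    u (φ * fun x => ψ (f x ⬝ᵥ lam • η)) = 0 := by
  obtain ⟨R, hRS, hRcov, hRdisj⟩ := (isCompact_pball x₀ κ).exists_pairwiseDisjoint_pball_cover m
  have hsupp : Function.support (φ * fun x => ψ (f x ⬝ᵥ lam • η)) ⊆ ⋃ a ∈ R, pball a m :=
    (Function.support_mul_subset_left _ _).trans ((subset_tsupport _).trans (hφ.trans hRcov))
  rw [Finset.eq_sum_indicator_of_support_subset hRdisj hsupp,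
    Finset.sum_congr rfl fun a ha => hψ.indicator_pball_mul_eq_smul (hφm a) (hf a (hRS ha)),
    hu.map_sum_smul _ _ fun a ha =>
      (isSBOn_indicator_pball ((pball_subset_pball hκm (hRS ha)).trans hκU)).mul_isLocallyConstant
        (hψ.isLocallyConstant_dotProduct _)]
  exact Finset.sum_eq_zero fun a ha => mul_eq_zero_of_right _ (hu₀ a (hRS ha))

theorem LamSmoothAt.pushOn [IsTopologicalRing K] {U₁ : Set (ι → K)}
    {f g : (ι → K) → ι → K} (hψ : IsStandardChar ψ) (hU : IsOpen U) (hU₁ : IsOpen U₁)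
    (hfU : Set.MapsTo f U U₁) (hgU : Set.MapsTo g U₁ U)
    (hgf : ∀ x ∈ U, g (f x) = x) (hf : ContinuousOn f U) (hg : ContinuousOn g U₁)
    (hu : IsDistributionOn U u) {x₀ η₀ : ι → K} (hx₀ : x₀ ∈ U) {A : Matrix ι ι K}
    (hA : HasStrictDerivWithin f A U x₀) (h : LamSmoothAt ψ Λ U u x₀ (η₀ ᵥ* A)) :
    LamSmoothAt ψ Λ U₁ (pushOn U f u) (f x₀) η₀ := by
  obtain ⟨κ₀, c₀, N₀, hκ₀U, hN₀⟩ := h.exists_FTrans_indicator_pball_eq_zero hψ hU hu hx₀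
  obtain ⟨μ, hμ⟩ := exists_le_ordVec_vecMul A
  obtain ⟨e, he⟩ := exists_le_ordVec_of_mem_pball η₀ (c₀ - μ)
  obtain ⟨r, hr⟩ := hA.exists_pball (c₀ - e)
  set κ := max r κ₀
  have hκU : pball x₀ κ ⊆ U := (pball_anti x₀ (le_max_right _ _)).trans hκ₀U
  refine ⟨U₁ ∩ g ⁻¹' pball x₀ κ, pball η₀ (c₀ - μ), hg.isOpen_inter_preimage hU₁ (isOpen_pball _ _),
    isOpen_pball _ _, ⟨hfU hx₀, by simp [hgf x₀ hx₀, mem_pball_self]⟩, mem_pball_self _ _,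
    fun φ₁ hφ₁ hsupp => ?_⟩
  have hφ := hφ₁.indicator_comp hU hgU hgf hf hg
  have hφκ : tsupport (U.indicator (φ₁ ∘ f)) ⊆ pball x₀ κ :=
    (tsupport_indicator_comp_subset hgf hg hφ₁).trans
      (Set.image_subset_iff.2 fun _ hz => (hsupp hz).2)
  obtain ⟨m₀, hm₀⟩ := hφ.1.exists_apply_eq_of_mem_pball hφ.2.1
  refine ⟨min N₀ (1 - c₀ - max m₀ κ), fun lam hlam hord η hη => ?_⟩
  obtain ⟨ℓ, hℓ⟩ := WithTop.ne_top_iff_exists.1 (ne_top_of_lt hord)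
  rw [← hℓ] at hord
  norm_cast at hord
  have hm : max m₀ κ ≤ 1 - c₀ - ℓ := by have := hord.trans_le (min_le_right _ _); omega
  have hphase : ∀ a ∈ pball x₀ κ, ∀ x ∈ pball a (1 - c₀ - ℓ),
      1 ≤ ord lam + (ordVec (f x - f a - A *ᵥ (x - a)) + ordVec η) := fun a ha x hx => by
    have hx' := pball_subset_pball ((le_max_right _ _).trans hm) ha hx
    have herr := hr x ⟨pball_anti x₀ (le_max_left _ _) hx', hκU hx'⟩
      a ⟨pball_anti x₀ (le_max_left _ _) ha, hκU ha⟩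
    rw [mem_pball, ordVec_sub_comm] at hx
    rw [← hℓ]
    calc (1 : WithTop ℤ) = ((ℓ + (c₀ - e + (1 - c₀ - ℓ) + e) : ℤ) : WithTop ℤ) := by
          norm_cast; omega
      _ ≤ _ := by
        push_cast
        exact add_le_add le_rfl (add_le_add ((add_le_add le_rfl hx).trans herr) (he η hη))
  have hηA : η ᵥ* A ∈ pball (η₀ ᵥ* A) c₀ := by
    rw [mem_pball, ← Matrix.sub_vecMul]
    exact (WithTop.coe_le_add_of_sub_le hη).trans (hμ _)
  show FTrans ψ (_root_.pushOn U f u) φ₁ (lam • η) = 0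
  rw [FTrans_eq_mul, pushOn_mul]
  exact hu.apply_mul_char_comp_eq_zero hψ hκU ((le_max_right _ _).trans hm) hφκ
    (hm₀ _ ((le_max_left _ _).trans hm)) hphase fun a ha => hN₀ lam hlam ℓ hℓ.symm
      (hord.trans_le (min_le_left _ _)) a (pball_anti x₀ (le_max_right _ _) ha) _ hηA

end Forward

theorem lamSmoothAt_pushforward_iff_general {K : Type} [Field K] [TopologicalSpace K]
    [IsTopologicalRing K] [NALocalField K]
    (ψ : AddChar K ℂ) (hψ : IsStandardChar ψ)
    (Λ : Set K)
    {n : ℕ} (U U₁ : Set (Fin n → K)) (hU : IsOpen U) (hU₁ : IsOpen U₁)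
    (f g : (Fin n → K) → Fin n → K)
    (hfU : Set.MapsTo f U U₁) (hgU : Set.MapsTo g U₁ U)
    (hgf : ∀ x ∈ U, g (f x) = x) (hfg : ∀ z ∈ U₁, f (g z) = z)
    (hg : StrictC1Within g U₁)
    (Df : (Fin n → K) → Matrix (Fin n) (Fin n) K)
    (hDf : ∀ a ∈ U, HasStrictDerivWithin f (Df a) U a)
    (u : ((Fin n → K) → ℂ) → ℂ) (hu : IsDistributionOn U u)
    (x₀ ξ₀ : Fin n → K) (hx₀ : x₀ ∈ U) :
    LamSmoothAt ψ Λ U u x₀ ξ₀ ↔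
      LamSmoothAt ψ Λ U₁ (pushOn U f u) (f x₀) (Matrix.vecMul ξ₀ (Df x₀)⁻¹) := by
  have hfc : ContinuousOn f U := fun a ha => (hDf a ha).continuousWithinAt ha
  have hgc : ContinuousOn g U₁ := hg.continuousOn
  obtain ⟨B, hB⟩ := hg (f x₀) (hfU hx₀)
  have hBA : B * Df x₀ = 1 := (hDf x₀ hx₀).mul_eq_one_of_leftInvOn hU hx₀ hB hfU hgf
  rw [Matrix.inv_eq_left_inv hBA]
  constructor
  · intro h
    exact LamSmoothAt.pushOn hψ hU hU₁ hfU hgU hgf hfc hgc hu hx₀ (hDf x₀ hx₀)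
      (by rwa [Matrix.vecMul_vecMul, hBA, Matrix.vecMul_one])
  · intro h
    have h' := h.pushOn hψ hU₁ hU hgU hfU hfg hgc hfc (hu.pushOn hU hgU hgf hfc hgc) (hfU hx₀) hB
    rw [hgf x₀ hx₀] at h'
    exact h'.congr hψ fun φ hφ => pushOn_pushOn_of_tsupport_subset hfU hgf hφ.2.2

/-- Let `f : U → U₁` be a strict `C¹` isomorphism between two open
subsets of `K^n`, with differential `Df`, and let `u ∈ S'(U)`. Then `(x₀, ξ₀)` is
`Λ`-micro-locally smooth for `u` if and only if `(f(x₀), (ᵗDf(x₀))⁻¹ ξ₀)` is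
`Λ`-micro-locally smooth for the push-forward `f_*u ∈ S'(U₁)`. -/
theorem lamSmoothAt_pushforward_iff {K : Type} [Field K] [TopologicalSpace K]
    [IsTopologicalRing K] [NALocalField K]
    (ψ : AddChar K ℂ) (hψ : IsStandardChar ψ)
    (Λ : Set K) (hΛ : IsOpenFinIndexSubgroup Λ)
    {n : ℕ} (U U₁ : Set (Fin n → K)) (hU : IsOpen U) (hU₁ : IsOpen U₁)
    (f g : (Fin n → K) → Fin n → K)
    (hfU : Set.MapsTo f U U₁) (hgU : Set.MapsTo g U₁ U)
    (hgf : ∀ x ∈ U, g (f x) = x) (hfg : ∀ z ∈ U₁, f (g z) = z)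
    (hf : StrictC1Within f U) (hg : StrictC1Within g U₁)
    (Df : (Fin n → K) → Matrix (Fin n) (Fin n) K)
    (hDf : ∀ a ∈ U, HasStrictDerivWithin f (Df a) U a)
    (u : ((Fin n → K) → ℂ) → ℂ) (hu : IsDistributionOn U u)
    (x₀ ξ₀ : Fin n → K) (hx₀ : x₀ ∈ U) (hξ₀ : ξ₀ ≠ 0) (hinv : IsUnit (Df x₀)) :
    LamSmoothAt ψ Λ U u x₀ ξ₀ ↔
      LamSmoothAt ψ Λ U₁ (pushOn U f u) (f x₀) (Matrix.vecMul ξ₀ (Df x₀)⁻¹) :=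
  lamSmoothAt_pushforward_iff_general ψ hψ Λ U U₁ hU hU₁ f g hfU hgU hgf hfg hg Df hDf u hu x₀ ξ₀
    hx₀
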